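/- Suppose ℓ* > r is an integer satisfying (ℓ* − r)/λ_{ℓ*} ≤ Σ_{i=1}^{ℓ*}(1/λ_i) ≤ (ℓ* − r)/λ_{ℓ*+1}. Then there exist finitely many subsets I_1, …, I_m ⊆ {1, …, ℓ*}, each of cardinality r, and weights p_1, …, p_m ≥ 0 with Σ_j p_j = 1, such that for every f ∈ F: Σ_{j=1}^{m} p_j · inf_{w ∈ span{φ_i : i ∈ I_j}} ‖f − w‖² ≤ (ℓ* − r)/Σ_{i=1}^{ℓ*}(1/λ_i). -/

import Mathlib

/-!
Put `S = ∑_{i < ℓ*} 1/λ_i`, `B = (ℓ* - r)/S` and `q_i = max 0 (1 - B/λ_i)`. The two conditions on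
`ℓ*` say exactly that `λ_i ≥ B` for `i < ℓ*` and `λ_i ≤ B` for `i ≥ ℓ*`, so `q` vanishes beyond
`ℓ*` and `(q_i)_{i < ℓ*}` is a point of the hypersimplex `[0,1]^ℓ* ∩ {∑ q_i = r}`. An extreme point
of the hypersimplex has no fractional coordinate (a fractional coordinate forces a second one, and
moving along `e_i - e_j` stays inside), so by Krein–Milman `q` is a convex combination of indicator
vectors of `r`-subsets: these are the `I_j` with weights `p_j`, and `q_i = ∑_j p_j [i ∈ I_j]`.
Bounding each infimum by the error of the orthogonal projection and using Parseval, the mixture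
of errors is at most `∑_i (1 - q_i) ⟪f, φ_i⟫² ≤ B ∑_i ⟪f, φ_i⟫² / λ_i ≤ B`.
-/

open Finset
open scoped RealInnerProductSpace

def hypersimplex (ι : Type*) [Fintype ι] (r : ℕ) : Set (ι → ℝ) :=
  Set.Icc 0 1 ∩ {q | ∑ i, q i = r}

section Hypersimplex

variable {ι : Type*} [Fintype ι] {r : ℕ}

theorem convex_hypersimplex : Convex ℝ (hypersimplex ι r) :=
  (convex_Icc 0 1).inter <| convex_hyperplane
    ⟨fun _ _ => sum_add_distrib, fun _ _ => (mul_sum _ _ _).symm⟩ _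

theorem isCompact_hypersimplex : IsCompact (hypersimplex ι r) :=
  isCompact_Icc.inter_right <| isClosed_eq (continuous_finsetSum _ fun i _ => continuous_apply i)
    continuous_const

theorem exists_ne_mem_Ioo_of_mem_hypersimplex {q : ι → ℝ} (hq : q ∈ hypersimplex ι r) {i : ι}
    (hi : q i ∈ Set.Ioo 0 1) : ∃ j ≠ i, q j ∈ Set.Ioo 0 1 := by
  classical
  by_contra! h
  have hint : ∀ j ∈ univ.erase i, q j = if q j = 1 then 1 else 0 := fun j hj => by
    have := h j (ne_of_mem_erase hj)
    rcases (hq.1.1 j).eq_or_lt with h0 | h0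
    · simp [← h0]
    · have h1 : q j = 1 := by_contra fun h1 => this ⟨h0, (hq.1.2 j).lt_of_ne h1⟩
      simp [h1]
  have hsum : q i + ((univ.erase i).filter (q · = 1)).card = r := by
    rw [← sum_boole, ← sum_congr rfl hint, add_sum_erase _ _ (mem_univ i), hq.2]
  set N := ((univ.erase i).filter (q · = 1)).card
  have hNr : N < r := by exact_mod_cast (by linarith [hi.1] : (N : ℝ) < r)
  have hrN : r < N + 1 := by exact_mod_cast (by linarith [hi.2] : (r : ℝ) < N + 1)
  omega

theorem notMem_extremePoints_hypersimplex {q : ι → ℝ} {i j : ι} (hij : i ≠ j)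
    (hi : q i ∈ Set.Ioo 0 1) (hj : q j ∈ Set.Ioo 0 1) :
    q ∉ (hypersimplex ι r).extremePoints ℝ := by
  classical
  intro hq
  set ε := min (min (q i) (1 - q i)) (min (q j) (1 - q j))
  have hε : 0 < ε := by simp only [ε, lt_min_iff, sub_pos]; exact ⟨⟨hi.1, hi.2⟩, hj.1, hj.2⟩
  have hεi : ε ≤ q i ∧ ε ≤ 1 - q i := le_min_iff.1 (min_le_left _ _)
  have hεj : ε ≤ q j ∧ ε ≤ 1 - q j := le_min_iff.1 (min_le_right _ _)
  set d : ι → ℝ := ε • (Pi.single i 1 - Pi.single j 1)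
  have hdi : d i = ε := by simp [d, hij]
  have hdj : d j = -ε := by simp [d, hij.symm]
  have hdk : ∀ k, k ≠ i → k ≠ j → d k = 0 := fun k hki hkj => by simp [d, hki, hkj]
  have hmem : ∀ s : ℝ, |s| ≤ 1 → q + s • d ∈ hypersimplex ι r := by
    intro s hs
    have hsε : |s * ε| ≤ ε := by
      rw [abs_mul, abs_of_pos hε]; exact mul_le_of_le_one_left hε.le hs
    obtain ⟨hlo, hhi⟩ := abs_le.1 hsε
    have hcoord : ∀ k, q k + s * d k ∈ Set.Icc 0 1 := fun k => by
      by_cases hki : k = i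
      · subst hki; rw [hdi]; constructor <;> linarith
      by_cases hkj : k = j
      · subst hkj; rw [hdj]; constructor <;> linarith
      rw [hdk k hki hkj, mul_zero, add_zero]
      exact ⟨hq.1.1.1 k, hq.1.1.2 k⟩
    refine ⟨⟨fun k => (hcoord k).1, fun k => (hcoord k).2⟩, ?_⟩
    simpa [d, sum_add_distrib, ← mul_sum] using hq.1.2
  have hseg : q ∈ openSegment ℝ (q + (-1 : ℝ) • d) (q + (1 : ℝ) • d) :=
    ⟨1 / 2, 1 / 2, by norm_num, by norm_num, by norm_num, by module⟩
  have hd0 := congrFun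
    ((mem_extremePoints.1 hq).2 _ (hmem (-1) (by norm_num)) _ (hmem 1 (by norm_num)) hseg).2 i
  rw [Pi.add_apply, one_smul, hdi, add_eq_left] at hd0
  exact hε.ne' hd0

theorem eq_zero_or_eq_one_of_mem_extremePoints_hypersimplex {q : ι → ℝ}
    (hq : q ∈ (hypersimplex ι r).extremePoints ℝ) (i : ι) : q i = 0 ∨ q i = 1 := by
  by_contra! h
  have hi : q i ∈ Set.Ioo 0 1 :=
    ⟨(hq.1.1.1 i).lt_of_ne' h.1, (hq.1.1.2 i).lt_of_ne h.2⟩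
  obtain ⟨j, hji, hj⟩ := exists_ne_mem_Ioo_of_mem_hypersimplex hq.1 hi
  exact notMem_extremePoints_hypersimplex hji.symm hi hj hq

theorem extremePoints_hypersimplex_subset :
    (hypersimplex ι r).extremePoints ℝ ⊆
      (fun s : Finset ι => (s : Set ι).indicator 1) '' {s | s.card = r} := by
  classical
  intro q hq
  have h01 := eq_zero_or_eq_one_of_mem_extremePoints_hypersimplex hq
  have hq_eq : (univ.filter (q · = 1) : Set ι).indicator 1 = q := by
    ext i
    rcases h01 i with h | h <;> simp [h]
  refine ⟨univ.filter (q · = 1), ?_, hq_eq⟩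
  have hsum := hq.1.2
  rw [← hq_eq] at hsum
  simpa [Set.indicator_apply] using hsum

theorem hypersimplex_subset_convexHull :
    hypersimplex ι r ⊆
      convexHull ℝ ((fun s : Finset ι => (s : Set ι).indicator 1) '' {s | s.card = r}) := by
  have hfin :
      ((fun s : Finset ι => (s : Set ι).indicator (1 : ι → ℝ)) '' {s | s.card = r}).Finite :=
    Set.toFinite _
  rw [← closure_convexHull_extremePoints isCompact_hypersimplex convex_hypersimplex,
    ← (hfin.isClosed_convexHull ℝ).closure_eq]
  exact closure_mono (convexHull_mono extremePoints_hypersimplex_subset)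

theorem exists_sum_smul_indicator_eq_of_mem_hypersimplex {q : ι → ℝ}
    (hq : q ∈ hypersimplex ι r) :
    ∃ (m : ℕ) (I : Fin m → Finset ι) (p : Fin m → ℝ), (∀ j, (I j).card = r) ∧
      (∀ j, 0 ≤ p j) ∧ ∑ j, p j = 1 ∧ ∑ j, p j • ((I j : Set ι).indicator 1) = q := by
  obtain ⟨κ, _, w, z, hw0, hw1, hz, rfl⟩ :=
    mem_convexHull_iff_exists_fintype.1 (hypersimplex_subset_convexHull hq)
  choose I hI hIz using hz
  let e := (Fintype.equivFin κ).symm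
  refine ⟨_, I ∘ e, w ∘ e, fun j => hI _, fun j => hw0 _, ?_, ?_⟩
  · exact (e.sum_comp w).trans hw1
  · simp only [Function.comp_apply, hIz]
    exact e.sum_comp fun k => w k • z k

theorem sum_mul_sum_eq_sum_sum_smul_indicator {κ : Type*} [Fintype κ] (p : κ → ℝ)
    (I : κ → Finset ι) (c : ι → ℝ) :
    ∑ j, p j * ∑ i ∈ I j, c i = ∑ i, (∑ j, p j • ((I j : Set ι).indicator 1)) i * c i := by
  classical
  simp only [Finset.sum_apply, Pi.smul_apply, Set.indicator_apply, mem_coe, Pi.one_apply,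
    smul_eq_mul, mul_ite, mul_one, mul_zero, sum_mul, mul_sum, ite_mul, zero_mul]
  rw [sum_comm]
  simp [sum_ite_mem]

end Hypersimplex

section Orthonormal

variable {H : Type*} [NormedAddCommGroup H] [InnerProductSpace ℝ H]

theorem Orthonormal.sInf_norm_sub_sq_span_le {ι : Type*} {v : ι → H} (hv : Orthonormal ℝ v)
    (f : H) (s : Finset ι) :
    sInf {t : ℝ | ∃ w ∈ Submodule.span ℝ (v '' ↑s), t = ‖f - w‖ ^ 2}
      ≤ ‖f‖ ^ 2 - ∑ i ∈ s, ⟪f, v i⟫ ^ 2 := by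
  set w₀ := ∑ i ∈ s, ⟪f, v i⟫ • v i
  have hw₀ : w₀ ∈ Submodule.span ℝ (v '' ↑s) :=
    Submodule.sum_mem _ fun i hi => Submodule.smul_mem _ _ (Submodule.subset_span ⟨i, hi, rfl⟩)
  have hinner : ⟪f, w₀⟫ = ∑ i ∈ s, ⟪f, v i⟫ ^ 2 := by
    simp only [w₀, inner_sum, real_inner_smul_right, sq]
  have hnorm : ‖w₀‖ ^ 2 = ∑ i ∈ s, ⟪f, v i⟫ ^ 2 := by
    rw [← real_inner_self_eq_norm_sq, hv.inner_sum]
    simp [sq]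
  refine csInf_le ⟨0, fun t ⟨w, _, ht⟩ => ht ▸ sq_nonneg _⟩ ⟨w₀, hw₀, ?_⟩
  rw [norm_sub_sq_real, hinner, hnorm]
  ring

theorem Orthonormal.hasSum_inner_sq [CompleteSpace H] {ι : Type*} {v : ι → H}
    (hv : Orthonormal ℝ v) (htot : (Submodule.span ℝ (Set.range v)).topologicalClosure = ⊤)
    (f : H) : HasSum (fun i => ⟪f, v i⟫ ^ 2) (‖f‖ ^ 2) := by
  have := (HilbertBasis.mk hv htot.ge).hasSum_inner_mul_inner f f
  simpa [HilbertBasis.coe_mk, real_inner_comm f, sq, real_inner_self_eq_norm_sq] using this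

theorem Orthonormal.sum_mul_sInf_norm_sub_sq_le_tsum [CompleteSpace H] {v : ℕ → H}
    (hv : Orthonormal ℝ v) (htot : (Submodule.span ℝ (Set.range v)).topologicalClosure = ⊤)
    (f : H) {n m : ℕ} {J : Fin m → Finset (Fin n)} {p : Fin m → ℝ} (hp0 : ∀ j, 0 ≤ p j)
    (hp1 : ∑ j, p j = 1) {q : ℕ → ℝ}
    (hpq : ∑ j, p j • ((J j : Set (Fin n)).indicator 1) = fun i : Fin n => q i)
    (hq : ∀ i, n ≤ i → q i = 0) :
    ∑ j, p j * sInf {t : ℝ | ∃ w ∈ Submodule.span ℝ (v '' ↑((J j).map Fin.valEmbedding)),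
        t = ‖f - w‖ ^ 2}
      ≤ ∑' i, (1 - q i) * ⟪f, v i⟫ ^ 2 := by
  have hqc : ∀ i ∉ range n, q i * ⟪f, v i⟫ ^ 2 = 0 := fun i hi => by
    rw [hq i (by simpa using hi), zero_mul]
  calc _ ≤ ∑ j, p j * (‖f‖ ^ 2 - ∑ i ∈ (J j).map Fin.valEmbedding, ⟪f, v i⟫ ^ 2) :=
        sum_le_sum fun j _ => mul_le_mul_of_nonneg_left (hv.sInf_norm_sub_sq_span_le f _) (hp0 j)
    _ = ‖f‖ ^ 2 - ∑ i ∈ range n, q i * ⟪f, v i⟫ ^ 2 := by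
        simp only [mul_sub, sum_sub_distrib, ← sum_mul, hp1, one_mul, sum_map,
          Fin.valEmbedding_apply, sum_mul_sum_eq_sum_sum_smul_indicator, hpq]
        rw [Fin.sum_univ_eq_sum_range fun i => q i * ⟪f, v i⟫ ^ 2]
    _ = ∑' i, (1 - q i) * ⟪f, v i⟫ ^ 2 := by
        rw [← tsum_eq_sum (L := .unconditional ℕ) hqc, ← (hv.hasSum_inner_sq htot f).tsum_eq,
          ← (hv.hasSum_inner_sq htot f).summable.tsum_sub (summable_of_ne_finset_zero hqc)]
        simp only [sub_mul, one_mul]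

end Orthonormal

section Waterfilling

variable {lam : ℕ → ℝ} {B : ℝ}

noncomputable def waterfill (lam : ℕ → ℝ) (B : ℝ) (i : ℕ) : ℝ := max 0 (1 - B / lam i)

theorem waterfill_eq_zero {i : ℕ} (hi : 0 < lam i) (h : lam i ≤ B) : waterfill lam B i = 0 :=
  max_eq_left <| sub_nonpos.2 <| (one_le_div hi).2 h

theorem waterfill_eq_one_sub {i : ℕ} (hi : 0 < lam i) (h : B ≤ lam i) :
    waterfill lam B i = 1 - B / lam i :=
  max_eq_right <| sub_nonneg.2 <| (div_le_one hi).2 h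

theorem waterfill_le_one {i : ℕ} (hi : 0 < lam i) (hB : 0 ≤ B) : waterfill lam B i ≤ 1 :=
  max_le zero_le_one <| sub_le_self _ <| div_nonneg hB hi.le

theorem waterfill_mem_hypersimplex {n r : ℕ} (hpos : ∀ i, 0 < lam i) (hB : 0 ≤ B)
    (hB_le : ∀ i < n, B ≤ lam i) (hBS : B * ∑ i ∈ range n, 1 / lam i = n - r) :
    (fun i : Fin n => waterfill lam B i) ∈ hypersimplex (Fin n) r := by
  refine ⟨⟨fun i => le_max_left _ _, fun i => waterfill_le_one (hpos i) hB⟩, ?_⟩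
  change ∑ i : Fin n, waterfill lam B i = r
  rw [Fin.sum_univ_eq_sum_range (waterfill lam B),
    sum_congr rfl fun i hi => waterfill_eq_one_sub (hpos i) (hB_le i (mem_range.1 hi)),
    sum_sub_distrib, sum_const, card_range, nsmul_one]
  simp only [div_eq_mul_one_div B, ← mul_sum, hBS]
  ring

theorem tsum_one_sub_waterfill_mul_le (hpos : ∀ i, 0 < lam i) (hB : 0 ≤ B) {c : ℕ → ℝ}
    (hc : ∀ i, 0 ≤ c i) (hsum : Summable fun i => c i / lam i) :
    ∑' i, (1 - waterfill lam B i) * c i ≤ B * ∑' i, c i / lam i := by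
  have hle : ∀ i, (1 - waterfill lam B i) * c i ≤ B * (c i / lam i) := fun i => by
    rw [← mul_div_assoc, mul_div_right_comm]
    exact mul_le_mul_of_nonneg_right (sub_le_comm.1 (le_max_right _ _)) (hc i)
  have hnonneg : ∀ i, 0 ≤ (1 - waterfill lam B i) * c i := fun i =>
    mul_nonneg (sub_nonneg.2 (waterfill_le_one (hpos i) hB)) (hc i)
  have hsum' : Summable fun i => B * (c i / lam i) := hsum.mul_left B
  rw [← tsum_mul_left]
  exact (hsum'.of_nonneg_of_le hnonneg hle).tsum_le_tsum hle hsum'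

end Waterfilling

theorem stmt18_general {H : Type*} [NormedAddCommGroup H] [InnerProductSpace ℝ H]
    [CompleteSpace H]
    (phi : ℕ → H) (hphi : Orthonormal ℝ phi)
    (htot : (Submodule.span ℝ (Set.range phi)).topologicalClosure = ⊤)
    (lam : ℕ → ℝ) (hpos : ∀ j, 0 < lam j) (hmono : Antitone lam)
    (r : ℕ)
    (lstar : ℕ) (hl : r < lstar)
    (hcond1 : ((lstar : ℝ) - r) / lam (lstar - 1) ≤ ∑ i ∈ Finset.range lstar, 1 / lam i)
    (hcond2 : ∑ i ∈ Finset.range lstar, 1 / lam i ≤ ((lstar : ℝ) - r) / lam lstar) :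
    ∃ (m : ℕ) (I : Fin m → Finset ℕ) (p : Fin m → ℝ),
      (∀ j, I j ⊆ Finset.range lstar) ∧
      (∀ j, (I j).card = r) ∧
      (∀ j, 0 ≤ p j) ∧ (∑ j, p j = 1) ∧
      ∀ f : H, (Summable fun j => ⟪f, phi j⟫ ^ 2 / lam j) →
        (∑' j, ⟪f, phi j⟫ ^ 2 / lam j) ≤ 1 →
        ∑ j, p j * sInf { t : ℝ | ∃ w ∈ Submodule.span ℝ (phi '' ↑(I j)), t = ‖f - w‖ ^ 2 }
          ≤ ((lstar : ℝ) - r) / ∑ i ∈ Finset.range lstar, 1 / lam i := by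
  set S := ∑ i ∈ range lstar, 1 / lam i
  set B := ((lstar : ℝ) - r) / S
  have hS : 0 < S := sum_pos (fun i _ => one_div_pos.2 (hpos i)) (nonempty_range_iff.2 (by omega))
  have hB : 0 ≤ B := div_nonneg (sub_nonneg.2 (by exact_mod_cast hl.le)) hS.le
  have hBS : B * S = lstar - r := div_mul_cancel₀ _ hS.ne'
  have hB_le : ∀ i < lstar, B ≤ lam i := fun i hi => by
    refine le_trans ?_ (hmono (Nat.le_sub_one_of_lt hi))
    rw [div_le_iff₀ hS, mul_comm]
    exact (div_le_iff₀ (hpos _)).1 hcond1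
  have hle_B : ∀ i, lstar ≤ i → lam i ≤ B := fun i hi => by
    refine (hmono hi).trans ?_
    rw [le_div_iff₀ hS, mul_comm]
    exact (le_div_iff₀ (hpos _)).1 hcond2
  obtain ⟨m, J, p, hJ, hp0, hp1, hpq⟩ :=
    exists_sum_smul_indicator_eq_of_mem_hypersimplex (waterfill_mem_hypersimplex hpos hB hB_le hBS)
  refine ⟨m, fun j => (J j).map Fin.valEmbedding, p, fun j => ?_, fun j => by simp [hJ],
    hp0, hp1, fun f hf hf1 => ?_⟩
  · rw [← Nat.Iio_eq_range, ← Fin.map_valEmbedding_univ]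
    exact map_subset_map.2 (subset_univ (J j))
  calc _ ≤ ∑' i, (1 - waterfill lam B i) * ⟪f, phi i⟫ ^ 2 :=
        hphi.sum_mul_sInf_norm_sub_sq_le_tsum htot f hp0 hp1 hpq
          fun i hi => waterfill_eq_zero (hpos i) (hle_B i hi)
    _ ≤ B * ∑' i, ⟪f, phi i⟫ ^ 2 / lam i :=
        tsum_one_sub_waterfill_mul_le hpos hB (fun i => sq_nonneg _) hf
    _ ≤ B := mul_le_of_le_one_right hB hf1

/-- In the Hilbert-space setting, suppose the integer `ℓ* > r` satisfies
`(ℓ*−r)/λ_{ℓ*} ≤ Σ_{i=1}^{ℓ*} 1/λ_i ≤ (ℓ*−r)/λ_{ℓ*+1}` (0-based: `λ_i = lam (i−1)`).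
Then there are finitely many size-`r` subsets `I_1,…,I_m` of `{1,…,ℓ*}` (0-based: subsets
of `range ℓ*`) and weights `p_j ≥ 0` with `Σ_j p_j = 1` such that for every `f ∈ F`,
`Σ_j p_j · inf_{w ∈ span{φ_i : i ∈ I_j}} ‖f − w‖² ≤ (ℓ*−r)/Σ_{i=1}^{ℓ*} 1/λ_i`. -/
theorem stmt18 {H : Type*} [NormedAddCommGroup H] [InnerProductSpace ℝ H]
    [CompleteSpace H]
    (phi : ℕ → H) (hphi : Orthonormal ℝ phi)
    (htot : (Submodule.span ℝ (Set.range phi)).topologicalClosure = ⊤)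
    (lam : ℕ → ℝ) (hpos : ∀ j, 0 < lam j) (hmono : Antitone lam)
    (hlim : Filter.Tendsto lam Filter.atTop (nhds 0))
    (r : ℕ) (hr : 0 < r)
    (lstar : ℕ) (hl : r < lstar)
    (hcond1 : ((lstar : ℝ) - r) / lam (lstar - 1) ≤ ∑ i ∈ Finset.range lstar, 1 / lam i)
    (hcond2 : ∑ i ∈ Finset.range lstar, 1 / lam i ≤ ((lstar : ℝ) - r) / lam lstar) :
    ∃ (m : ℕ) (I : Fin m → Finset ℕ) (p : Fin m → ℝ),
      (∀ j, I j ⊆ Finset.range lstar) ∧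
      (∀ j, (I j).card = r) ∧
      (∀ j, 0 ≤ p j) ∧ (∑ j, p j = 1) ∧
      ∀ f : H, (Summable fun j => ⟪f, phi j⟫ ^ 2 / lam j) →
        (∑' j, ⟪f, phi j⟫ ^ 2 / lam j) ≤ 1 →
        ∑ j, p j * sInf { t : ℝ | ∃ w ∈ Submodule.span ℝ (phi '' ↑(I j)), t = ‖f - w‖ ^ 2 }
          ≤ ((lstar : ℝ) - r) / ∑ i ∈ Finset.range lstar, 1 / lam i :=
  stmt18_general phi hphi htot lam hpos hmono r lstar hl hcond1 hcond2
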